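/- arXiv:1912.03895 — 4 statements merged into one kernel-verified Lean document; each statement's English description precedes it below -/
import Mathlib

section
/- Let $0 \leq r \leq 1/2$, $r \neq 1$, and let $P_n$ be the polynomials defined by $P_0=1$, $P_1(t)=t$, $tP_n = rP_{n-1} + (1-r)P_{n+1}$. Then for all $1 \leq m \leq n$, $(1-r)^{m-1} P_m P_n = r^m P_{n-m} + \sum_{k=1}^{m-1} r^{m-k}(1-r)^{k-1}(1-2r) P_{n-m+2k} + (1-r)^m P_{n+m}$. -/
/-!
By the recursion, `D(a, b) = (1 - r) P_{a+1} P_{b+1} - r P_a P_b` depends only on `a + b`: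
moving one index from `a` to `b` changes it by `P_{b+1} (t P_{a+1}) - P_{a+1} (t P_{b+1}) = 0`.
So `D(a, b) = D(0, a + b) = (1 - r)² P_{a+b+2} - r² P_{a+b}`, which says that
`L m n = (1 - r) ^ (m - 1) P_m P_n` satisfies
`L (m+1) (n+1) = r L m n + (1 - r) ^ (m - 1) ((1 - r)² P_{n+m+2} - r² P_{n+m})`;
the right-hand side of the formula satisfies the same first-order recursion in `m`.
-/

open Polynomial Finset

noncomputable def P (r : ℝ) : ℕ → ℝ[X]
  | 0 => 1
  | 1 => X
  | (n + 2) => (1 - r)⁻¹ • (X * P r (n + 1) - r • P r n)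

variable {r : ℝ}

@[simp] lemma P_zero : P r 0 = 1 := rfl

@[simp] lemma P_one : P r 1 = X := rfl

lemma X_mul_P_succ (hr : r ≠ 1) (n : ℕ) :
    X * P r (n + 1) = r • P r n + (1 - r) • P r (n + 2) := by
  have h : (1 : ℝ) - r ≠ 0 := sub_ne_zero.mpr hr.symm
  rw [P, smul_smul, mul_inv_cancel₀ h, one_smul]
  module

lemma P_succ_mul_P_succ_sub_P_mul_P (hr : r ≠ 1) (a b : ℕ) :
    (1 - r) • (P r (a + 1) * P r (b + 1)) - r • (P r a * P r b) =
      (1 - r) ^ 2 • P r (a + b + 2) - r ^ 2 • P r (a + b) := by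
  induction a generalizing b with
  | zero =>
    have h := X_mul_P_succ hr b
    simp only [P_zero, P_one, zero_add, one_mul, smul_eq_C_mul, map_sub, map_one, map_pow] at h ⊢
    linear_combination (1 - C r) * h
  | succ a ih =>
    have ha := X_mul_P_succ hr a
    have hb := X_mul_P_succ hr b
    have ih' := ih (b + 1)
    rw [show a + (b + 1) = a + 1 + b by ring] at ih'
    simp only [smul_eq_C_mul] at ha hb ih' ⊢
    linear_combination ih' - P r (b + 1) * ha + P r (a + 1) * hb

lemma P_succ_mul_P (hr : r ≠ 1) (m j : ℕ) :
    (1 - r) ^ m • (P r (m + 1) * P r (m + 1 + j)) =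
      r ^ (m + 1) • P r j +
      (∑ k ∈ Icc 1 m, (r ^ (m + 1 - k) * (1 - r) ^ (k - 1) * (1 - 2 * r)) • P r (j + 2 * k)) +
      (1 - r) ^ (m + 1) • P r (j + 2 * (m + 1)) := by
  induction m with
  | zero =>
    have h := X_mul_P_succ hr j
    simp only [P_one, zero_add] at h ⊢
    rw [add_comm 1 j, h]
    simp
  | succ m ih =>
    have hD := P_succ_mul_P_succ_sub_P_mul_P hr (m + 1) (m + 1 + j)
    rw [show m + 1 + (m + 1 + j) + 2 = j + 2 * (m + 1 + 1) by ring,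
      show m + 1 + (m + 1 + j) = j + 2 * (m + 1) by ring] at hD
    have hsum : ∑ k ∈ Icc 1 m, (r ^ (m + 1 + 1 - k) * (1 - r) ^ (k - 1) * (1 - 2 * r)) •
          P r (j + 2 * k) =
        r • ∑ k ∈ Icc 1 m, (r ^ (m + 1 - k) * (1 - r) ^ (k - 1) * (1 - 2 * r)) •
          P r (j + 2 * k) := by
      rw [smul_sum]
      refine sum_congr rfl fun k hk => ?_
      rw [show m + 1 + 1 - k = m + 1 - k + 1 by have := (mem_Icc.mp hk).2; omega]
      module
    have hL : (1 - r) ^ (m + 1) • (P r (m + 1 + 1) * P r (m + 1 + 1 + j)) =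
        r • ((1 - r) ^ m • (P r (m + 1) * P r (m + 1 + j))) +
          (1 - r) ^ m •
            ((1 - r) ^ 2 • P r (j + 2 * (m + 1 + 1)) - r ^ 2 • P r (j + 2 * (m + 1))) := by
      rw [← hD, show m + 1 + 1 + j = m + 1 + j + 1 by ring]
      module
    rw [hL, ih, sum_Icc_succ_top (by omega), hsum, Nat.add_sub_cancel, Nat.add_sub_cancel_left]
    module

theorem stmt_1_general (r : ℝ) (hr1 : r ≠ 1)
    (m n : ℕ) (hm : 1 ≤ m) (hmn : m ≤ n) :
    (1 - r) ^ (m - 1) • (P r m * P r n) =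
      r ^ m • P r (n - m) +
      (∑ k ∈ Finset.Icc 1 (m - 1),
        (r ^ (m - k) * (1 - r) ^ (k - 1) * (1 - 2 * r)) • P r (n - m + 2 * k)) +
      (1 - r) ^ m • P r (n + m) := by
  obtain ⟨m, rfl⟩ : ∃ m', m = m' + 1 := ⟨m - 1, by omega⟩
  obtain ⟨j, rfl⟩ : ∃ j, n = m + 1 + j := ⟨n - (m + 1), by omega⟩
  rw [Nat.add_sub_cancel, Nat.add_sub_cancel_left,
    show m + 1 + j + (m + 1) = j + 2 * (m + 1) by ring]
  exact P_succ_mul_P hr1 m j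

theorem stmt_1 (r : ℝ) (hr0 : 0 ≤ r) (hr2 : r ≤ 1 / 2) (hr1 : r ≠ 1)
    (m n : ℕ) (hm : 1 ≤ m) (hmn : m ≤ n) :
    (1 - r) ^ (m - 1) • (P r m * P r n) =
      r ^ m • P r (n - m) +
      (∑ k ∈ Finset.Icc 1 (m - 1),
        (r ^ (m - k) * (1 - r) ^ (k - 1) * (1 - 2 * r)) • P r (n - m + 2 * k)) +
      (1 - r) ^ m • P r (n + m) :=
  stmt_1_general r hr1 m n hm hmn
end

section
/- For $0 < r \leq 1/2$, the measure $\mu(dt) = \frac{1}{2\pi r}\frac{\sqrt{4r(1-r)-t^2}}{1-t^2}\,dt$ on the interval $I_r = [-2\sqrt{r(1-r)}, 2\sqrt{r(1-r)}]$ is a probability measure, i.e., $\frac{1}{2\pi r}\int_{-2\sqrt{r(1-r)}}^{2\sqrt{r(1-r)}} \frac{\sqrt{4r(1-r)-t^2}}{1-t^2}\,dt = 1$. -/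
/-!
Put `a = 2√(r(1-r))` and `b = 1 - 2r`, so that `a² + b² = 1`. On `(-a, a)` the density
`√(a² - t²) / (1 - t²)` has the explicit primitive `arcsin (t / a) - b arcsin (b t / (a √(1 - t²)))`,
which is odd and takes the value `π (1 - b) / 2 = π r` at `t = a`. The density is nonnegative, hence
integrable, and the fundamental theorem of calculus gives the integral `2 π r`.
-/

open Real Set intervalIntegral

theorem integral_eq_sub_of_hasDerivAt_of_nonneg {f f' : ℝ → ℝ} {a b : ℝ} (hab : a ≤ b)
    (hcont : ContinuousOn f (Icc a b)) (hderiv : ∀ x ∈ Ioo a b, HasDerivAt f (f' x) x)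
    (hpos : ∀ x ∈ Ioo a b, 0 ≤ f' x) :
    ∫ y in a..b, f' y = f b - f a :=
  integral_eq_sub_of_hasDerivAt_of_le hab hcont hderiv <|
    (intervalIntegrable_iff_integrableOn_Ioc_of_le hab).2 <|
      integrableOn_deriv_of_nonneg hcont hderiv hpos

section
variable {a b t : ℝ}

lemma hasDerivAt_arcsin_div (ha : 0 < a) (ht : t ∈ Ioo (-a) a) :
    HasDerivAt (fun t => arcsin (t / a)) (1 / √(a ^ 2 - t ^ 2)) t := by
  have hta : t ^ 2 < a ^ 2 := sq_lt_sq' ht.1 ht.2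
  have hne₁ : t / a ≠ -1 := by
    rw [ne_eq, div_eq_iff ha.ne']; intro h; nlinarith
  have hne₂ : t / a ≠ 1 := by
    rw [ne_eq, div_eq_iff ha.ne']; intro h; nlinarith
  refine ((hasDerivAt_arcsin hne₁ hne₂).comp t ((hasDerivAt_id t).div_const a)).congr_deriv ?_
  have hsq : 1 - (t / a) ^ 2 = (√(a ^ 2 - t ^ 2) / a) ^ 2 := by
    rw [div_pow, div_pow, sq_sqrt (by linarith)]; field_simp
  rw [hsq, sqrt_sq (by positivity)]
  have : 0 < √(a ^ 2 - t ^ 2) := sqrt_pos.2 (by linarith)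
  field_simp

lemma hasDerivAt_arcsin_mul_div_sqrt (ha : 0 < a) (hab : a ^ 2 + b ^ 2 = 1)
    (ht : t ∈ Ioo (-a) a) :
    HasDerivAt (fun t => arcsin (b * t / (a * √(1 - t ^ 2))))
      (b / ((1 - t ^ 2) * √(a ^ 2 - t ^ 2))) t := by
  have hta : t ^ 2 < a ^ 2 := sq_lt_sq' ht.1 ht.2
  have h1t : 0 < 1 - t ^ 2 := by nlinarith
  set s := √(1 - t ^ 2)
  set w := √(a ^ 2 - t ^ 2)
  have hs : 0 < s := sqrt_pos.2 h1t
  have hw : 0 < w := sqrt_pos.2 (by linarith)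
  have hs2 : s ^ 2 = 1 - t ^ 2 := sq_sqrt h1t.le
  have hw2 : w ^ 2 = a ^ 2 - t ^ 2 := sq_sqrt (by linarith)
  have hs' : HasDerivAt (fun t => √(1 - t ^ 2)) (-t / s) t := by
    refine (((hasDerivAt_pow 2 t).const_sub 1).sqrt h1t.ne').congr_deriv ?_
    field_simp; ring
  have hg : HasDerivAt (fun t => b * t / (a * √(1 - t ^ 2))) (b / (a * s ^ 3)) t := by
    refine (((hasDerivAt_id t).const_mul b).div (hs'.const_mul a) (by positivity)).congr_deriv ?_
    change (b * 1 * (a * s) - b * t * (a * (-t / s))) / (a * s) ^ 2 = _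
    field_simp
    linear_combination b * hs2
  have hsqrt : √(1 - (b * t / (a * s)) ^ 2) = w / (a * s) := by
    have hsq : 1 - (b * t / (a * s)) ^ 2 = (w / (a * s)) ^ 2 := by
      field_simp
      linear_combination a ^ 2 * hs2 - hw2 - t ^ 2 * hab
    rw [hsq, sqrt_sq (by positivity)]
  have hg1 : (b * t / (a * s)) ^ 2 < 1 := by
    rw [div_pow, div_lt_one (by positivity), mul_pow, mul_pow, hs2]
    nlinarith
  have hne₁ : b * t / (a * s) ≠ -1 := fun h => by rw [h] at hg1; norm_num at hg1
  have hne₂ : b * t / (a * s) ≠ 1 := fun h => by rw [h] at hg1; norm_num at hg1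
  refine ((hasDerivAt_arcsin hne₁ hne₂).comp t hg).congr_deriv ?_
  rw [hsqrt, ← hs2]
  field_simp

end

noncomputable def arcsinPrimitive (a b t : ℝ) : ℝ :=
  arcsin (t / a) - b * arcsin (b * t / (a * √(1 - t ^ 2)))

section
variable {a b : ℝ}

lemma arcsinPrimitive_neg (t : ℝ) : arcsinPrimitive a b (-t) = -arcsinPrimitive a b t := by
  simp only [arcsinPrimitive, neg_sq, mul_neg, neg_div, arcsin_neg]
  ring

lemma arcsinPrimitive_self (ha : 0 < a) (hb : 0 ≤ b) (hab : a ^ 2 + b ^ 2 = 1) :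
    arcsinPrimitive a b a = π / 2 * (1 - b) := by
  have hsqrt : √(1 - a ^ 2) = b := by
    rw [show 1 - a ^ 2 = b ^ 2 by linarith, sqrt_sq hb]
  rcases hb.eq_or_lt with rfl | hb
  · simp [arcsinPrimitive, div_self ha.ne']
  · rw [arcsinPrimitive, hsqrt, div_self ha.ne', mul_comm a b, div_self (by positivity),
      arcsin_one]
    ring

lemma hasDerivAt_arcsinPrimitive (ha : 0 < a) (hab : a ^ 2 + b ^ 2 = 1) {t : ℝ}
    (ht : t ∈ Ioo (-a) a) :
    HasDerivAt (arcsinPrimitive a b) (√(a ^ 2 - t ^ 2) / (1 - t ^ 2)) t := by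
  have hta : t ^ 2 < a ^ 2 := sq_lt_sq' ht.1 ht.2
  refine ((hasDerivAt_arcsin_div ha ht).sub
    ((hasDerivAt_arcsin_mul_div_sqrt ha hab ht).const_mul b)).congr_deriv ?_
  have h1t : 1 - t ^ 2 ≠ 0 := by nlinarith
  have hw : √(a ^ 2 - t ^ 2) ≠ 0 := (sqrt_pos.2 (by linarith)).ne'
  field_simp
  rw [sq_sqrt (by linarith)]
  linear_combination -hab

-- For `b = 0` the second term vanishes even at `t = ±1`, where its denominator does.
lemma continuousOn_arcsinPrimitive (ha : 0 < a) (hab : a ^ 2 + b ^ 2 = 1) :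
    ContinuousOn (arcsinPrimitive a b) (Icc (-a) a) := by
  rcases eq_or_ne b 0 with rfl | hb
  · have hF : arcsinPrimitive a 0 = fun t => arcsin (t / a) := by
      ext t; simp [arcsinPrimitive]
    rw [hF]
    fun_prop
  · have hden : ∀ t ∈ Icc (-a) a, a * √(1 - t ^ 2) ≠ 0 := by
      rintro t ⟨h₁, h₂⟩
      have : 0 < b ^ 2 := by positivity
      have : 0 < 1 - t ^ 2 := by nlinarith
      positivity
    unfold arcsinPrimitive
    fun_prop (disch := assumption)

theorem integral_sqrt_sq_sub_sq_div_one_sub_sq (ha : 0 < a) (hb : 0 ≤ b)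
    (hab : a ^ 2 + b ^ 2 = 1) :
    ∫ t in (-a)..a, √(a ^ 2 - t ^ 2) / (1 - t ^ 2) = π * (1 - b) := by
  have hpos : ∀ t ∈ Ioo (-a) a, 0 ≤ √(a ^ 2 - t ^ 2) / (1 - t ^ 2) := fun t ht => by
    have := sq_lt_sq' ht.1 ht.2
    have : 0 ≤ 1 - t ^ 2 := by nlinarith
    positivity
  rw [integral_eq_sub_of_hasDerivAt_of_nonneg (by linarith) (continuousOn_arcsinPrimitive ha hab)
    (fun t ht => hasDerivAt_arcsinPrimitive ha hab ht) hpos, arcsinPrimitive_neg,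
    arcsinPrimitive_self ha hb hab]
  ring

end

theorem stmt_8 (r : ℝ) (hr0 : 0 < r) (hr2 : r ≤ 1 / 2) :
    (1 / (2 * Real.pi * r)) *
      ∫ t in (-(2 * Real.sqrt (r * (1 - r))))..(2 * Real.sqrt (r * (1 - r))),
        Real.sqrt (4 * r * (1 - r) - t ^ 2) / (1 - t ^ 2) = 1 := by
  have hr : 0 < r * (1 - r) := by nlinarith
  have ha : (2 * √(r * (1 - r))) ^ 2 = 4 * r * (1 - r) := by
    rw [mul_pow, sq_sqrt hr.le]; ring
  rw [← ha, integral_sqrt_sq_sub_sq_div_one_sub_sq (b := 1 - 2 * r) (by positivity)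
    (by linarith) (by rw [ha]; ring)]
  field_simp
  ring
end

section
/- For $0 < r \leq 1/2$ and all $n \geq 0$, $\int_{I_r} P_n(t)\, \frac{1}{2\pi r}\frac{\sqrt{4r(1-r)-t^2}}{1-t^2}\,dt = \delta_{n,0}$, where $P_n$ are the polynomials defined by $P_0=1$, $P_1(t)=t$, $tP_n = rP_{n-1}+(1-r)P_{n+1}$, and $I_r = [-2\sqrt{r(1-r)},2\sqrt{r(1-r)}]$. -/
open Polynomial

/-!
Substitute `t = 2√(r(1-r)) cos θ` with `θ ∈ [0, π]` and put `q = √(r/(1-r))`, `p = q² = r/(1-r)`.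
The recurrence becomes the Chebyshev recurrence, so that
`sin² θ · Pₙ(t) = qⁿ/2 · (cos nθ - (1-r) cos (n+2)θ - r cos (n-2)θ)`, and the measure becomes a
constant times `dθ / (1 - 2p cos 2θ + p²)`. For `p < 1` the Poisson integral formula for the
harmonic function `Re zᵏ` on the unit disc gives
`∫₀^π cos 2kθ / (1 - 2p cos 2θ + p²) dθ = π pᵏ / (1 - p²)`, odd frequencies integrate to zero by
the symmetry `θ ↦ π - θ`, and since `(1-r)p² - p + r = 0` everything cancels except for `n = 0`.
For `r = 1/2` the measure is `dθ / π` and the `Pₙ` are the Chebyshev polynomials.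
-/

open Real Set MeasureTheory

noncomputable def cosCombination (r : ℝ) (n : ℕ) (θ : ℝ) : ℝ :=
  cos (n * θ) - (1 - r) * cos ((n + 2) * θ) - r * cos ((n - 2) * θ)

lemma cosCombination_add_two (r : ℝ) (n : ℕ) (θ : ℝ) :
    cosCombination r (n + 2) θ =
      2 * cos θ * cosCombination r (n + 1) θ - cosCombination r n θ := by
  have h (x : ℝ) : cos (x + θ) = 2 * cos θ * cos x - cos (x - θ) := by
    rw [cos_add, cos_sub]; ring
  simp only [cosCombination, Nat.cast_add, Nat.cast_ofNat, Nat.cast_one]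
  linear_combination (norm := ring_nf) h ((n + 1) * θ) - (1 - r) * h ((n + 3) * θ) -
    r * h ((n - 1) * θ)

lemma eval_P_add_two (r t : ℝ) (n : ℕ) :
    (P r (n + 2)).eval t = (1 - r)⁻¹ * (t * (P r (n + 1)).eval t - r * (P r n).eval t) := by
  simp [P]

lemma sin_sq_mul_eval_P {r q : ℝ} (hq : (1 - r) * q ^ 2 = r) (n : ℕ) (θ : ℝ) :
    sin θ ^ 2 * (P r n).eval (2 * (1 - r) * q * cos θ) = q ^ n / 2 * cosCombination r n θ := by
  induction n using Nat.twoStepInduction with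
  | zero =>
    simp only [P, eval_one, cosCombination, Nat.cast_zero, zero_mul, zero_add, zero_sub, cos_zero,
      neg_mul, cos_neg, cos_two_mul]
    linear_combination sin_sq_add_cos_sq θ
  | one =>
    simp only [P, eval_X, cosCombination, Nat.cast_one, one_mul]
    rw [show ((1:ℝ) - 2) * θ = -θ by ring, cos_neg, show ((1:ℝ) + 2) * θ = 3 * θ by ring,
      cos_three_mul]
    linear_combination (2 * (1 - r) * q * cos θ) * sin_sq_add_cos_sq θ
  | more n ih₀ ih₁ =>
    have hr : 1 - r ≠ 0 := fun h => by simp [h] at hq; linarith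
    set t := 2 * (1 - r) * q * cos θ
    calc sin θ ^ 2 * (P r (n + 2)).eval t
        = (1 - r)⁻¹ *
            (t * (sin θ ^ 2 * (P r (n + 1)).eval t) - r * (sin θ ^ 2 * (P r n).eval t)) := by
          rw [eval_P_add_two]; ring
      _ = q ^ (n + 2) / 2 * cosCombination r (n + 2) θ := by
        rw [ih₀, ih₁, cosCombination_add_two]
        field_simp
        linear_combination (q ^ n * cosCombination r n θ) * hq

lemma one_sub_two_mul_mul_cos_add_sq_pos {p : ℝ} (hp : |p| < 1) (φ : ℝ) :
    0 < 1 - 2 * p * cos φ + p ^ 2 := by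
  have h : p * cos φ ≤ |p| := (le_abs_self _).trans
    ((abs_mul p _).trans_le (mul_le_of_le_one_right (abs_nonneg p) (abs_cos_le_one φ)))
  nlinarith [sq_abs p, abs_nonneg p]

open Complex InnerProductSpace Metric in
lemma integral_cos_nat_mul_div_poisson {p : ℝ} (hp : |p| < 1) (k : ℕ) :
    ∫ φ in (0:ℝ)..2 * π, Real.cos (k * φ) / (1 - 2 * p * Real.cos φ + p ^ 2) =
      2 * π * p ^ k / (1 - p ^ 2) := by
  have harm : HarmonicOnNhd (fun z : ℂ => (z ^ k).re) (closedBall 0 1) :=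
    fun z _ => ((differentiable_id.pow k).analyticAt z).harmonicAt_re
  have h := harm.circleAverage_poissonKernel_smul (w := (p : ℂ)) (by simpa using hp)
  have hkernel (θ : ℝ) : (poissonKernel 0 p • fun z : ℂ => (z ^ k).re) (circleMap 0 1 θ) =
      (1 - p ^ 2) * (Real.cos (k * θ) / (1 - 2 * p * Real.cos θ + p ^ 2)) := by
    have hnorm : ‖cexp (θ * I) - p‖ ^ 2 = 1 - 2 * p * Real.cos θ + p ^ 2 := by
      rw [← normSq_eq_norm_sq, normSq_apply]
      simp only [sub_re, sub_im, exp_ofReal_mul_I_re, exp_ofReal_mul_I_im, ofReal_re, ofReal_im]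
      linear_combination Real.sin_sq_add_cos_sq θ
    have hre : (cexp (θ * I) ^ k).re = Real.cos (k * θ) := by
      rw [← Complex.exp_nat_mul, ← mul_assoc, ← ofReal_natCast, ← ofReal_mul, exp_ofReal_mul_I_re]
    rw [Pi.smul_apply', smul_eq_mul, poissonKernel, circleMap_zero]
    simp only [sub_zero, ofReal_one, one_mul, norm_exp_ofReal_mul_I, hnorm, hre, norm_real,
      Real.norm_eq_abs, sq_abs]
    ring
  rw [circleAverage_def, intervalIntegral.integral_congr (fun θ _ => hkernel θ),
    intervalIntegral.integral_const_mul, ← ofReal_pow, ofReal_re, smul_eq_mul] at h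
  have hp2 : 0 < 1 - p ^ 2 := by nlinarith [abs_lt.1 hp, sq_abs p]
  field_simp at h ⊢
  linear_combination h

lemma integral_cos_two_mul_nat_mul_div {p : ℝ} (hp : |p| < 1) (k : ℕ) :
    ∫ θ in (0:ℝ)..π, cos (2 * k * θ) / (1 - 2 * p * cos (2 * θ) + p ^ 2) =
      π * p ^ k / (1 - p ^ 2) := by
  simp_rw [mul_assoc 2 (k : ℝ), mul_left_comm 2 (k : ℝ)]
  rw [intervalIntegral.integral_comp_mul_left
      (fun φ => cos (k * φ) / (1 - 2 * p * cos φ + p ^ 2)) two_ne_zero,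
    mul_zero, integral_cos_nat_mul_div_poisson hp, smul_eq_mul]
  ring

lemma integral_cos_odd_mul_div (p : ℝ) (m : ℤ) :
    ∫ θ in (0:ℝ)..π, cos ((2 * m + 1) * θ) / (1 - 2 * p * cos (2 * θ) + p ^ 2) = 0 := by
  set f := fun θ => cos ((2 * m + 1) * θ) / (1 - 2 * p * cos (2 * θ) + p ^ 2)
  have hanti (θ : ℝ) : f (π - θ) = -f θ := by
    have hcos : cos ((2 * m + 1) * (π - θ)) = -cos ((2 * m + 1) * θ) := by
      rw [show (2 * m + 1) * (π - θ) = m * (2 * π) - ((2 * m + 1) * θ - π) by ring,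
        cos_int_mul_two_pi_sub, cos_sub_pi]
    have hden : cos (2 * (π - θ)) = cos (2 * θ) := by rw [mul_sub, cos_two_pi_sub]
    simp only [f, hcos, hden, neg_div]
  have h := intervalIntegral.integral_comp_sub_left f π (a := 0) (b := π)
  simp only [hanti, intervalIntegral.integral_neg, sub_self, sub_zero] at h
  linarith

lemma integral_cosCombination_div_of_abs_lt_one {r p : ℝ} (hp : |p| < 1) (hrp : (1 - r) * p = r)
    (n : ℕ) :
    ∫ θ in (0:ℝ)..π, cosCombination r n θ / (1 - 2 * p * cos (2 * θ) + p ^ 2) =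
      if n = 0 then π * (1 - r) else 0 := by
  set J := fun c : ℝ => ∫ θ in (0:ℝ)..π, cos (c * θ) / (1 - 2 * p * cos (2 * θ) + p ^ 2)
  have hint (c : ℝ) : IntervalIntegrable
      (fun θ => cos (c * θ) / (1 - 2 * p * cos (2 * θ) + p ^ 2)) volume 0 π :=
    (Continuous.div (by fun_prop) (by fun_prop)
      (fun θ => (one_sub_two_mul_mul_cos_add_sq_pos hp _).ne')).intervalIntegrable 0 π
  have hlin : ∫ θ in (0:ℝ)..π, cosCombination r n θ / (1 - 2 * p * cos (2 * θ) + p ^ 2) =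
      J n - (1 - r) * J (n + 2) - r * J (n - 2) := by
    simp only [J, cosCombination, sub_div, mul_div_assoc]
    rw [intervalIntegral.integral_sub ((hint _).sub ((hint _).const_mul _)) ((hint _).const_mul _),
      intervalIntegral.integral_sub (hint _) ((hint _).const_mul _),
      intervalIntegral.integral_const_mul, intervalIntegral.integral_const_mul]
  have heven (c : ℝ) (k : ℕ) (hc : c = 2 * k) : J c = π * p ^ k / (1 - p ^ 2) := by
    simp only [J, hc, integral_cos_two_mul_nat_mul_div hp]
  have hodd (c : ℝ) (m : ℤ) (hc : c = 2 * m + 1) : J c = 0 := by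
    simp only [J, hc, integral_cos_odd_mul_div]
  have hp2 : 1 - p ^ 2 ≠ 0 := by nlinarith [abs_lt.1 hp, sq_abs p]
  rw [hlin]
  obtain ⟨k, rfl | rfl⟩ := Nat.even_or_odd' n
  · cases k with
    | zero =>
      have hJ : J (-2) = J 2 := by simp only [J, neg_mul, cos_neg]
      rw [Nat.mul_zero, Nat.cast_zero, zero_add, zero_sub, hJ, heven 0 0 (by simp),
        heven 2 1 (by simp), if_pos rfl]
      field_simp
      linear_combination (p - 1) * hrp
    | succ j =>
      rw [heven _ (j + 1) (by push_cast; ring), heven _ (j + 2) (by push_cast; ring),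
        heven _ j (by push_cast; ring), if_neg (by omega)]
      field_simp
      linear_combination π * p ^ j * (1 - p) * hrp
  · rw [hodd _ k (by push_cast; ring), hodd _ (k + 1) (by push_cast; ring),
      hodd _ (k - 1) (by push_cast; ring), if_neg (by omega)]
    ring

lemma integral_cos_nat_mul_eq_ite (n : ℕ) :
    ∫ θ in (0:ℝ)..π, cos (n * θ) = if n = 0 then π else 0 := by
  split_ifs with hn
  · simp [hn]
  · rw [intervalIntegral.integral_comp_mul_left (fun x => cos x) (Nat.cast_ne_zero.2 hn),
      integral_cos, mul_zero, sin_zero, sin_nat_mul_pi, sub_zero, smul_zero]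

lemma integral_cosCombination_half_div (n : ℕ) :
    ∫ θ in (0:ℝ)..π, cosCombination (1 / 2) n θ / (1 - 2 * 1 * cos (2 * θ) + 1 ^ 2) =
      if n = 0 then π * (1 - 1 / 2) else 0 := by
  have hcongr : EqOn (fun θ => cosCombination (1 / 2) n θ / (1 - 2 * 1 * cos (2 * θ) + 1 ^ 2))
      (fun θ => cos (n * θ) / 2) (Ioo 0 π) := by
    intro θ hθ
    have hsin : sin θ ≠ 0 := (sin_pos_of_pos_of_lt_pi hθ.1 hθ.2).ne'
    have hnum : cosCombination (1 / 2) n θ = 2 * sin θ ^ 2 * cos (n * θ) := by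
      simp only [cosCombination]
      rw [show ((n:ℝ) + 2) * θ = n * θ + 2 * θ by ring,
        show ((n:ℝ) - 2) * θ = n * θ - 2 * θ by ring, cos_add, cos_sub, cos_two_mul, cos_sq']
      ring
    have hden : (1:ℝ) - 2 * 1 * cos (2 * θ) + 1 ^ 2 = 4 * sin θ ^ 2 := by
      rw [cos_two_mul, cos_sq']
      ring
    simp only [hnum, hden]
    field_simp
    ring
  rw [intervalIntegral.integral_congr_Ioo_of_le pi_pos.le hcongr, intervalIntegral.integral_div,
    integral_cos_nat_mul_eq_ite]
  split_ifs <;> ring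

lemma integral_cosCombination_div {r p : ℝ} (hr2 : r ≤ 1 / 2) (hrp : (1 - r) * p = r) (n : ℕ) :
    ∫ θ in (0:ℝ)..π, cosCombination r n θ / (1 - 2 * p * cos (2 * θ) + p ^ 2) =
      if n = 0 then π * (1 - r) else 0 := by
  rcases hr2.lt_or_eq with hr2 | rfl
  · refine integral_cosCombination_div_of_abs_lt_one (abs_lt.2 ⟨?_, ?_⟩) hrp n <;> nlinarith
  · obtain rfl : p = 1 := by linarith
    exact integral_cosCombination_half_div n

lemma integral_neg_self_eq_integral_sin_smul_comp_cos {E : Type*} [NormedAddCommGroup E]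
    [NormedSpace ℝ E] {a : ℝ} (ha : 0 < a) (f : ℝ → E) :
    ∫ t in -a..a, f t = ∫ θ in (0:ℝ)..π, (a * sin θ) • f (a * cos θ) := by
  have himage : (fun θ => a * cos θ) '' Icc 0 π = Icc (-a) a := by
    rw [← image_image (a * ·) cos, bijOn_cos.image_eq, image_mul_left_Icc ha.le (by norm_num),
      mul_neg_one, mul_one]
  have hinj : InjOn (fun θ => a * cos θ) (Icc 0 π) :=
    fun x hx y hy hxy => injOn_cos hx hy (mul_left_cancel₀ ha.ne' hxy)
  have hderiv : ∀ θ ∈ Icc 0 π, HasDerivWithinAt (fun θ => a * cos θ) (a * -sin θ) (Icc 0 π) θ :=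
    fun θ _ => ((hasDerivAt_cos θ).const_mul a).hasDerivWithinAt
  rw [intervalIntegral.integral_of_le (by linarith), ← integral_Icc_eq_integral_Ioc, ← himage,
    integral_image_eq_integral_abs_deriv_smul measurableSet_Icc hderiv hinj,
    intervalIntegral.integral_of_le pi_pos.le, ← integral_Icc_eq_integral_Ioc]
  refine setIntegral_congr_fun measurableSet_Icc fun θ hθ => ?_
  rw [mul_neg, abs_neg, abs_of_nonneg (mul_nonneg ha.le (sin_nonneg_of_mem_Icc hθ))]

lemma sin_mul_eval_P_mul_density {r q θ : ℝ} (hr0 : 0 < r) (hq : (1 - r) * q ^ 2 = r)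
    (hq0 : 0 ≤ q) (hθ : 0 ≤ sin θ) (n : ℕ) :
    2 * (1 - r) * q * sin θ * ((P r n).eval (2 * (1 - r) * q * cos θ) *
      ((1 / (2 * π * r)) * (√(4 * r * (1 - r) - (2 * (1 - r) * q * cos θ) ^ 2) /
        (1 - (2 * (1 - r) * q * cos θ) ^ 2)))) =
      q ^ n / (π * (1 - r)) *
        (cosCombination r n θ / (1 - 2 * q ^ 2 * cos (2 * θ) + (q ^ 2) ^ 2)) := by
  have h1r : 0 < 1 - r := by nlinarith
  have hsqrt : √(4 * r * (1 - r) - (2 * (1 - r) * q * cos θ) ^ 2) = 2 * (1 - r) * q * sin θ := by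
    rw [← sqrt_sq (by positivity : 0 ≤ 2 * (1 - r) * q * sin θ)]
    congr 1
    linear_combination -4 * (1 - r) * hq - (2 * (1 - r) * q) ^ 2 * sin_sq_add_cos_sq θ
  have hden : 1 - (2 * (1 - r) * q * cos θ) ^ 2 =
      (1 - r) ^ 2 * (1 - 2 * q ^ 2 * cos (2 * θ) + (q ^ 2) ^ 2) := by
    rw [cos_two_mul]
    linear_combination -(2 - r + (1 - r) * q ^ 2) * hq
  rw [hsqrt, hden]
  calc 2 * (1 - r) * q * sin θ * ((P r n).eval (2 * (1 - r) * q * cos θ) *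
        ((1 / (2 * π * r)) * (2 * (1 - r) * q * sin θ /
          ((1 - r) ^ 2 * (1 - 2 * q ^ 2 * cos (2 * θ) + (q ^ 2) ^ 2)))))
      = sin θ ^ 2 * (P r n).eval (2 * (1 - r) * q * cos θ) * (2 / (π * (1 - r))) /
          (1 - 2 * q ^ 2 * cos (2 * θ) + (q ^ 2) ^ 2) := by
        field_simp
        rw [hq]
    _ = _ := by
        rw [sin_sq_mul_eval_P hq]
        ring

theorem stmt_9 (r : ℝ) (hr0 : 0 < r) (hr2 : r ≤ 1 / 2) (n : ℕ) :
    ∫ t in (-(2 * Real.sqrt (r * (1 - r))))..(2 * Real.sqrt (r * (1 - r))),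
        (P r n).eval t * ((1 / (2 * Real.pi * r)) *
          (Real.sqrt (4 * r * (1 - r) - t ^ 2) / (1 - t ^ 2))) =
      if n = 0 then 1 else 0 := by
  have h1r : 0 < 1 - r := by linarith
  set q := √(r / (1 - r))
  have hq0 : 0 < q := sqrt_pos.2 (div_pos hr0 h1r)
  have hq : (1 - r) * q ^ 2 = r := by
    rw [sq_sqrt (div_nonneg hr0.le h1r.le)]; field_simp
  have ha : 2 * √(r * (1 - r)) = 2 * (1 - r) * q := by
    rw [show r * (1 - r) = (1 - r) ^ 2 * (r / (1 - r)) by field_simp,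
      sqrt_mul (sq_nonneg _), sqrt_sq h1r.le, mul_assoc]
  rw [ha, integral_neg_self_eq_integral_sin_smul_comp_cos (by positivity)]
  rw [intervalIntegral.integral_congr fun θ hθ => (smul_eq_mul _ _).trans
      (sin_mul_eval_P_mul_density hr0 hq hq0.le
        (sin_nonneg_of_mem_Icc (by rwa [uIcc_of_le pi_pos.le] at hθ)) n),
    intervalIntegral.integral_const_mul, integral_cosCombination_div hr2 hq]
  split_ifs with hn
  · subst hn
    field_simp
  · rw [mul_zero]
end

section
/- Let $0 < r < 1/2$ and let $\lambda$ be real with $1 < |\lambda| < \sqrt{(1-r)/r}$. Then the atomic weight $\frac{1 - c_r(\lambda^2)}{1 - c_r(\lambda)^2}$ is strictly positive and strictly less than $1$, where $c_r(x) = rx + (1-r)/x$. -/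
/-!
Write `t = λ²`. Then `1 - c_r(t) = (t - 1)(1 - r - r t) / t`, which is positive for
`1 < t < (1 - r) / r`, and `c_r(λ²) = c_r(λ)² + r (1 - r) (λ - λ⁻¹)²`. So the denominator
`1 - c_r(λ)²` exceeds the positive numerator `1 - c_r(λ²)`, and the quotient lies in `(0, 1)`.
-/

noncomputable def cr (r x : ℝ) : ℝ := r * x + (1 - r) / x

lemma one_sub_cr (r : ℝ) {x : ℝ} (hx : x ≠ 0) : 1 - cr r x = (x - 1) * (1 - r - r * x) / x := by
  unfold cr
  field_simp
  ring

lemma cr_sq_add (r : ℝ) {x : ℝ} (hx : x ≠ 0) :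
    cr r x ^ 2 + r * (1 - r) * (x - x⁻¹) ^ 2 = cr r (x ^ 2) := by
  unfold cr
  field_simp
  ring

lemma one_sub_cr_pos {r x : ℝ} (hx : 1 < x) (hrx : r * x < 1 - r) : 0 < 1 - cr r x := by
  rw [one_sub_cr r (by positivity)]
  exact div_pos (mul_pos (by linarith) (by linarith)) (by linarith)

lemma cr_sq_lt_cr_sq {r x : ℝ} (hr0 : 0 < r) (hr1 : r < 1) (hx0 : x ≠ 0) (hx1 : x ^ 2 ≠ 1) :
    cr r x ^ 2 < cr r (x ^ 2) := by
  have hx : x - x⁻¹ ≠ 0 := fun h ↦ hx1 <| by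
    rw [sq]
    nth_rw 2 [sub_eq_zero.1 h]
    exact mul_inv_cancel₀ hx0
  rw [← cr_sq_add r hx0, lt_add_iff_pos_right]
  exact mul_pos (mul_pos hr0 (sub_pos.2 hr1)) (sq_pos_of_ne_zero hx)

theorem stmt_16_general (r : ℝ) (hr0 : 0 < r) (l : ℝ)
    (hl1 : 1 < |l|) (hl2 : |l| < Real.sqrt ((1 - r) / r)) :
    0 < (1 - (r * l ^ 2 + (1 - r) / l ^ 2)) / (1 - (r * l + (1 - r) / l) ^ 2) ∧
    (1 - (r * l ^ 2 + (1 - r) / l ^ 2)) / (1 - (r * l + (1 - r) / l) ^ 2) < 1 := by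
  show 0 < (1 - cr r (l ^ 2)) / (1 - cr r l ^ 2) ∧ (1 - cr r (l ^ 2)) / (1 - cr r l ^ 2) < 1
  have hl : 1 < l ^ 2 := by rw [← sq_abs]; exact one_lt_pow₀ hl1 two_ne_zero
  have hrl : r * l ^ 2 < 1 - r := by
    have h := (Real.lt_sqrt (abs_nonneg l)).1 hl2
    rw [sq_abs, lt_div_iff₀ hr0] at h
    linarith
  have hl0 : l ≠ 0 := by rintro rfl; norm_num at hl
  have hr1 : r < 1 := by nlinarith
  have hnum := one_sub_cr_pos hl hrl
  have hlt : 1 - cr r (l ^ 2) < 1 - cr r l ^ 2 :=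
    sub_lt_sub_left (cr_sq_lt_cr_sq hr0 hr1 hl0 hl.ne') 1
  exact ⟨div_pos hnum (hnum.trans hlt), (div_lt_one (hnum.trans hlt)).2 hlt⟩

theorem stmt_16 (r : ℝ) (hr0 : 0 < r) (hr2 : r < 1 / 2) (l : ℝ)
    (hl1 : 1 < |l|) (hl2 : |l| < Real.sqrt ((1 - r) / r)) :
    0 < (1 - (r * l ^ 2 + (1 - r) / l ^ 2)) / (1 - (r * l + (1 - r) / l) ^ 2) ∧
    (1 - (r * l ^ 2 + (1 - r) / l ^ 2)) / (1 - (r * l + (1 - r) / l) ^ 2) < 1 :=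
  stmt_16_general r hr0 l hl1 hl2
end
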